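/- (Boundedness of the periodic correction, discrete version of Lemma on periodic error.) For every u₀ ∈ ℝᴺ, letting u = K·u₀ and ũ = (T_P(α,β)·K)·u₀, the Euclidean norm of the difference satisfies the exact identity ‖u − ũ‖₂ = √((1−α)² + (1−β)²) · |u(0) − u(N−1)|. Moreover, the factor √((1−α)² + (1−β)²) = √(1 − 2α + 2α²) attains its minimum value 1/√2 over all α ∈ ℝ with α + β = 1 precisely at α = β = 1/2. -/
import Mathlib

open Matrix Finset

/-- The matrix `T_P(α,β)`: rows 0 and N−1 both have entry `α` in column 0, entry `β`
in column N−1, and 0 elsewhere; row `i` is the `i`-th standard basis row for `0 < i < N−1`. -/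
noncomputable def TP {n : ℕ} (α β : ℝ) : Matrix (Fin (n+2)) (Fin (n+2)) ℝ :=
  Matrix.of fun i j =>
    if i = 0 ∨ i = Fin.last (n+1) then
      (if j = 0 then α else if j = Fin.last (n+1) then β else 0)
    else if i = j then 1 else 0

lemma zero_ne_last (n : ℕ) : (0 : Fin (n+2)) ≠ Fin.last (n+1) := by
  simp [Fin.ext_iff]

lemma tp_mulVec_boundary {n : ℕ} (α β : ℝ) (v : Fin (n+2) → ℝ) (i : Fin (n+2))
    (hi : i = 0 ∨ i = Fin.last (n+1)) :
    (TP α β).mulVec v i = α * v 0 + β * v (Fin.last (n+1)) := by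
  unfold Matrix.mulVec dotProduct TP
  simp only [Matrix.of_apply, if_pos hi]
  rw [Fintype.sum_eq_add (0 : Fin (n+2)) (Fin.last (n+1)) (zero_ne_last n)]
  · simp [zero_ne_last n, (zero_ne_last n).symm]
  · rintro c ⟨hc0, hcl⟩
    simp [hc0, hcl]

lemma tp_mulVec_interior {n : ℕ} (α β : ℝ) (v : Fin (n+2) → ℝ) (i : Fin (n+2))
    (hi : ¬(i = 0 ∨ i = Fin.last (n+1))) :
    (TP α β).mulVec v i = v i := by
  unfold Matrix.mulVec dotProduct TP
  simp only [Matrix.of_apply, if_neg hi]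
  simp

/-- boundedness of the periodic correction, discrete version. -/
theorem periodic_correction_bounded {n : ℕ} (K : Matrix (Fin (n+2)) (Fin (n+2)) ℝ)
    (α β : ℝ) (hαβ : α + β = 1) :
    (∀ u₀ : Fin (n+2) → ℝ,
      Real.sqrt (∑ i, ((K.mulVec u₀) i - ((TP α β * K).mulVec u₀) i) ^ 2) =
        Real.sqrt ((1 - α) ^ 2 + (1 - β) ^ 2) *
          |(K.mulVec u₀) 0 - (K.mulVec u₀) (Fin.last (n+1))|) ∧
    Real.sqrt ((1 - α) ^ 2 + (1 - β) ^ 2) = Real.sqrt (1 - 2 * α + 2 * α ^ 2) ∧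
    (∀ α' β' : ℝ, α' + β' = 1 →
      1 / Real.sqrt 2 ≤ Real.sqrt ((1 - α') ^ 2 + (1 - β') ^ 2)) ∧
    (∀ α' β' : ℝ, α' + β' = 1 →
      (Real.sqrt ((1 - α') ^ 2 + (1 - β') ^ 2) = 1 / Real.sqrt 2 ↔
        α' = 1 / 2 ∧ β' = 1 / 2)) := by
  have hhalf : (1 : ℝ) / Real.sqrt 2 = Real.sqrt (1/2) := by
    rw [one_div, ← Real.sqrt_inv]
    norm_num
  refine ⟨?_, ?_, ?_, ?_⟩
  · intro u₀
    have hb : β = 1 - α := by linarith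
    subst hb
    set v := K.mulVec u₀ with hv
    have hcomp : (TP α (1-α) * K).mulVec u₀ = (TP α (1-α)).mulVec v := by
      rw [hv, ← Matrix.mulVec_mulVec]
    rw [hcomp]
    have hsum : ∑ i, (v i - (TP (n := n) α (1-α)).mulVec v i) ^ 2
        = ((1 - α) ^ 2 + (1 - (1 - α)) ^ 2) * (v 0 - v (Fin.last (n+1))) ^ 2 := by
      rw [Fintype.sum_eq_add (0 : Fin (n+2)) (Fin.last (n+1)) (zero_ne_last n)]
      · rw [tp_mulVec_boundary α (1-α) v 0 (Or.inl rfl),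
          tp_mulVec_boundary α (1-α) v (Fin.last (n+1)) (Or.inr rfl)]
        ring
      · rintro c ⟨hc0, hcl⟩
        rw [tp_mulVec_interior _ _ v c (by tauto)]
        ring
    rw [hsum, Real.sqrt_mul (by positivity), Real.sqrt_sq_eq_abs]
  · have h2 : (1 : ℝ) - β = α := by linarith
    rw [h2]; ring_nf
  · intro α' β' h
    have hβ : (1 : ℝ) - β' = α' := by linarith
    rw [hβ, hhalf]
    apply Real.sqrt_le_sqrt
    nlinarith [sq_nonneg (α' - 1/2)]
  · intro α' β' h
    have hβ : (1 : ℝ) - β' = α' := by linarith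
    rw [hβ, hhalf]
    rw [Real.sqrt_inj (by positivity) (by norm_num)]
    constructor
    · intro he
      have : α' = 1/2 := by nlinarith [sq_nonneg (α' - 1/2)]
      exact ⟨this, by linarith⟩
    · rintro ⟨h1, h2⟩
      rw [h1]; norm_num
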